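/- arXiv:2106.15382 — 4 statements merged into one kernel-verified Lean document; each statement's English description precedes it below -/
import Mathlib

section
/- Let H be a real N×M matrix, and let P ∈ ℝ^{N×K}, Q ∈ ℝ^{M×K} satisfy the joint orthogonality constraint PᵀP + QᵀQ = I_K. Then the maximum of tr(PᵀHQ) over all such (P,Q) equals half the sum of the K largest singular values of H, and it is attained at P = (√2/2)U₁, Q = (√2/2)V₁, where U₁ and V₁ consist of the leading K left and right singular vectors of H. -/
open Matrix Finset

/-!
Rotating by the singular vectors, `A = UᵀP` and `B = VᵀQ` again satisfy `AᵀA + BᵀB = 1`, and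
`tr(PᵀHQ) = ∑ₙ σₙ ⟪Aₙ, Bₙ⟫` over the rows of `A` and `B`. Since `y ↦ (Ay, By)` is an isometry,
projecting `(eᵢ, eⱼ)` onto its range gives `|Aᵢ + Bⱼ|² ≤ 2`, hence `⟪Aᵢ, Bⱼ⟫ ≤ 1/2`; and
`⟪Aₙ, Bₙ⟫ ≤ (|Aₙ|² + |Bₙ|²) / 2` bounds the total positive weight by `tr(AᵀA + BᵀB) / 2 = K / 2`.
A nonincreasing sequence weighted by weights in `[0, 1/2]` of total mass at most `K / 2` sums to at
most half of its first `K` terms. Equality holds at `P = U₁ / √2`, `Q = V₁ / √2`.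
-/

section DotProduct

variable {ι R : Type*} [Fintype ι] [CommRing R] [LinearOrder R] [IsStrictOrderedRing R]

theorem dotProduct_self_nonneg (a : ι → R) : 0 ≤ a ⬝ᵥ a :=
  sum_nonneg fun i _ => mul_self_nonneg (a i)

theorem two_mul_dotProduct_le (a b : ι → R) : 2 * (a ⬝ᵥ b) ≤ a ⬝ᵥ a + b ⬝ᵥ b := by
  have h := dotProduct_self_nonneg (a - b)
  simp only [sub_dotProduct, dotProduct_sub, dotProduct_comm b a] at h
  linarith

end DotProduct

section TransposeMul

variable {ι ι' κ R : Type*} [Fintype ι] [Fintype ι'] [Fintype κ] [CommSemiring R]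

theorem mulVec_dotProduct_mulVec (A : Matrix ι κ R) (y : κ → R) :
    (A *ᵥ y) ⬝ᵥ (A *ᵥ y) = y ⬝ᵥ ((Aᵀ * A) *ᵥ y) := by
  rw [dotProduct_mulVec, ← mulVec_transpose, mulVec_mulVec, dotProduct_comm]

theorem trace_transpose_mul_self (A : Matrix ι κ R) : (Aᵀ * A).trace = ∑ i, A i ⬝ᵥ A i := by
  simp only [trace, Matrix.diag, mul_apply, transpose_apply, dotProduct]
  exact sum_comm

theorem trace_transpose_mul_mul (A : Matrix ι κ R) (X : Matrix ι ι' R) (B : Matrix ι' κ R) :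
    (Aᵀ * X * B).trace = ∑ i, ∑ j, X i j * (A i ⬝ᵥ B j) := by
  rw [Matrix.mul_assoc, trace_mul_comm, Matrix.mul_assoc]
  simp only [trace, Matrix.diag, mul_apply, dotProduct_comm (A _)]
  rfl

end TransposeMul

section JointlyOrthonormal

variable {ι ι' κ : Type*} [Fintype ι] [Fintype ι'] [Fintype κ] [DecidableEq κ]

theorem dotProduct_self_vecMul_add_vecMul_le {R : Type*} [CommRing R] [LinearOrder R]
    [IsStrictOrderedRing R] {A : Matrix ι κ R} {B : Matrix ι' κ R} (hAB : Aᵀ * A + Bᵀ * B = 1)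
    (x : ι → R) (x' : ι' → R) :
    (x ᵥ* A + x' ᵥ* B) ⬝ᵥ (x ᵥ* A + x' ᵥ* B) ≤ x ⬝ᵥ x + x' ⬝ᵥ x' := by
  set y := x ᵥ* A + x' ᵥ* B
  have hgram : (A *ᵥ y) ⬝ᵥ (A *ᵥ y) + (B *ᵥ y) ⬝ᵥ (B *ᵥ y) = y ⬝ᵥ y := by
    rw [mulVec_dotProduct_mulVec, mulVec_dotProduct_mulVec, ← dotProduct_add, ← add_mulVec, hAB,
      one_mulVec]
  have hcross : x ⬝ᵥ (A *ᵥ y) + x' ⬝ᵥ (B *ᵥ y) = y ⬝ᵥ y := by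
    rw [dotProduct_mulVec, dotProduct_mulVec, ← add_dotProduct]
  -- `(x, x') - (A y, B y)` is the component of `(x, x')` orthogonal to the range of `y ↦ (A y, B y)`.
  have hresidual := add_nonneg (dotProduct_self_nonneg (x - A *ᵥ y))
    (dotProduct_self_nonneg (x' - B *ᵥ y))
  simp only [sub_dotProduct, dotProduct_sub, dotProduct_comm (A *ᵥ y) x,
    dotProduct_comm (B *ᵥ y) x'] at hresidual
  linarith

variable {A : Matrix ι κ ℝ} {B : Matrix ι' κ ℝ}

theorem row_dotProduct_row_le_half (hAB : Aᵀ * A + Bᵀ * B = 1) (i : ι) (j : ι') :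
    A i ⬝ᵥ B j ≤ 1 / 2 := by
  classical
  have h := dotProduct_self_vecMul_add_vecMul_le hAB (Pi.single i 1) (Pi.single j 1)
  have hdiff := dotProduct_self_nonneg (A i - B j)
  simp only [single_one_vecMul, single_one_dotProduct, Pi.single_eq_same] at h
  simp only [row, add_dotProduct, dotProduct_add, sub_dotProduct, dotProduct_sub,
    dotProduct_comm (B j) (A i)] at h hdiff
  linarith

theorem sum_row_dotProduct_self_add_eq_card (hAB : Aᵀ * A + Bᵀ * B = 1) :
    ∑ i, A i ⬝ᵥ A i + ∑ j, B j ⬝ᵥ B j = Fintype.card κ := by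
  rw [← trace_transpose_mul_self, ← trace_transpose_mul_self, ← trace_add, hAB, trace_one]

theorem sum_max_row_dotProduct_row_le (hAB : Aᵀ * A + Bᵀ * B = 1) {D : Finset (ι × ι')}
    (hfst : Set.InjOn Prod.fst (D : Set (ι × ι')))
    (hsnd : Set.InjOn Prod.snd (D : Set (ι × ι'))) :
    ∑ p ∈ D, max (A p.1 ⬝ᵥ B p.2) 0 ≤ Fintype.card κ / 2 := by
  classical
  calc ∑ p ∈ D, max (A p.1 ⬝ᵥ B p.2) 0 ≤ ∑ p ∈ D, (A p.1 ⬝ᵥ A p.1 + B p.2 ⬝ᵥ B p.2) / 2 := by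
        refine sum_le_sum fun p _ => max_le ?_ ?_
        · linarith [two_mul_dotProduct_le (A p.1) (B p.2)]
        · have := add_nonneg (dotProduct_self_nonneg (A p.1)) (dotProduct_self_nonneg (B p.2))
          positivity
    _ ≤ (∑ i, A i ⬝ᵥ A i + ∑ j, B j ⬝ᵥ B j) / 2 := by
        rw [← sum_div, sum_add_distrib, ← sum_image (f := fun i => A i ⬝ᵥ A i) hfst,
          ← sum_image (f := fun j => B j ⬝ᵥ B j) hsnd]
        gcongr ?_ / 2
        exact add_le_add (sum_le_univ_sum_of_nonneg fun i => dotProduct_self_nonneg (A i))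
          (sum_le_univ_sum_of_nonneg fun j => dotProduct_self_nonneg (B j))
    _ = Fintype.card κ / 2 := by rw [sum_row_dotProduct_self_add_eq_card hAB]

end JointlyOrthonormal

theorem sum_antitone_mul_le_sum_range {ι : Type*} (s : Finset ι) {ℓ : ι → ℕ}
    (hℓ : Set.InjOn ℓ s) {σ : ℕ → ℝ} (hσ : Antitone σ) {K : ℕ} (hσK : 0 ≤ σ K)
    {w : ι → ℝ} (hw : ∀ p ∈ s, 0 ≤ w p ∧ w p ≤ 1) (hsum : ∑ p ∈ s, w p ≤ K) :
    ∑ p ∈ s, σ (ℓ p) * w p ≤ ∑ n ∈ range K, σ n := by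
  classical
  -- Split `σ = (σ - σ K) + σ K`: the first part is positive only below `K`, where the weights are
  -- at most `1`, and the second part is controlled by the total weight.
  set g : ℕ → ℝ := fun n => max (σ n - σ K) 0
  have hg_nonneg : ∀ n, 0 ≤ g n := fun n => le_max_right _ _
  have hg_range : ∑ n ∈ range K, g n = ∑ n ∈ range K, σ n - K * σ K := by
    rw [sum_congr rfl fun n hn => max_eq_left (sub_nonneg.2 (hσ (mem_range.1 hn).le)),
      sum_sub_distrib, sum_const, card_range, nsmul_eq_mul]
  have hg_image : ∑ p ∈ s, g (ℓ p) ≤ ∑ n ∈ range K, g n := by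
    rw [← sum_image hℓ]
    calc ∑ n ∈ s.image ℓ, g n ≤ ∑ n ∈ s.image ℓ ∪ range K, g n :=
        sum_le_sum_of_subset_of_nonneg subset_union_left fun n _ _ => hg_nonneg n
    _ = ∑ n ∈ range K, g n := by
        refine (sum_subset subset_union_right fun n _ hn => max_eq_right ?_).symm
        exact sub_nonpos.2 (hσ (not_lt.1 (mt mem_range.2 hn)))
  have hterm : ∀ p ∈ s, (σ (ℓ p) - σ K) * w p ≤ g (ℓ p) := fun p hp => calc
    (σ (ℓ p) - σ K) * w p ≤ g (ℓ p) * w p :=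
      mul_le_mul_of_nonneg_right (le_max_left _ _) (hw p hp).1
    _ ≤ g (ℓ p) := mul_le_of_le_one_right (hg_nonneg _) (hw p hp).2
  calc ∑ p ∈ s, σ (ℓ p) * w p
      = ∑ p ∈ s, (σ (ℓ p) - σ K) * w p + σ K * ∑ p ∈ s, w p := by
        rw [mul_sum, ← sum_add_distrib]
        exact sum_congr rfl fun p _ => by ring
    _ ≤ ∑ n ∈ range K, g n + σ K * K :=
        add_le_add ((sum_le_sum hterm).trans hg_image) (mul_le_mul_of_nonneg_left hsum hσK)
    _ = ∑ n ∈ range K, σ n := by rw [hg_range]; ring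

def rectDiagonal (N M : ℕ) (σ : ℕ → ℝ) : Matrix (Fin N) (Fin M) ℝ :=
  of fun i j => if (i : ℕ) = j then σ i else 0

theorem trace_transpose_mul_rectDiagonal_mul_le {N M : ℕ} {κ : Type*} [Fintype κ] [DecidableEq κ]
    {A : Matrix (Fin N) κ ℝ} {B : Matrix (Fin M) κ ℝ} (hAB : Aᵀ * A + Bᵀ * B = 1)
    {σ : ℕ → ℝ} (hσ : ∀ n, 0 ≤ σ n) (hσ' : Antitone σ) :
    (Aᵀ * rectDiagonal N M σ * B).trace ≤ (∑ n ∈ range (Fintype.card κ), σ n) / 2 := by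
  set D := univ.filter fun p : Fin N × Fin M => (p.1 : ℕ) = p.2
  set w : Fin N × Fin M → ℝ := fun p => 2 * max (A p.1 ⬝ᵥ B p.2) 0
  have hD : ∀ p ∈ D, ∀ q ∈ D, (p.1 : ℕ) = q.1 → p = q := by
    intro p hp q hq h
    rw [mem_filter] at hp hq
    exact Prod.ext (Fin.ext h) (Fin.ext (hp.2.symm.trans (h.trans hq.2)))
  have htrace : (Aᵀ * rectDiagonal N M σ * B).trace = ∑ p ∈ D, σ p.1 * (A p.1 ⬝ᵥ B p.2) := by
    rw [trace_transpose_mul_mul, ← Fintype.sum_prod_type', sum_filter]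
    simp only [rectDiagonal, of_apply, ite_mul, zero_mul]
  have hw : ∀ p ∈ D, 0 ≤ w p ∧ w p ≤ 1 := fun p _ =>
    ⟨by positivity, by linarith [max_le (row_dotProduct_row_le_half hAB p.1 p.2) one_half_pos.le]⟩
  have hsum : ∑ p ∈ D, w p ≤ Fintype.card κ := by
    have hfst : Set.InjOn Prod.fst D := fun p hp q hq h => hD p hp q hq (congrArg Fin.val h)
    have hsnd : Set.InjOn Prod.snd D := fun p hp q hq h =>
      hD p hp q hq (by rw [(mem_filter.1 hp).2, (mem_filter.1 hq).2, h])
    have := sum_max_row_dotProduct_row_le hAB hfst hsnd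
    rw [← mul_sum]
    linarith
  calc (Aᵀ * rectDiagonal N M σ * B).trace ≤ (∑ p ∈ D, σ p.1 * w p) / 2 := by
        rw [htrace, sum_div]
        refine sum_le_sum fun p _ => ?_
        rw [mul_div_assoc]
        exact mul_le_mul_of_nonneg_left (by linarith [le_max_left (A p.1 ⬝ᵥ B p.2) 0]) (hσ _)
    _ ≤ (∑ n ∈ range (Fintype.card κ), σ n) / 2 := by
        gcongr
        exact sum_antitone_mul_le_sum_range D hD hσ' (hσ _) hw hsum

section Submatrix

variable {R : Type*} {m m' n n' k k' : Type*} [Fintype m] [Fintype m']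

theorem transpose_mul_transpose_mul_self [CommSemiring R] [DecidableEq m] {U : Matrix m m R}
    (hU : U * Uᵀ = 1) (P : Matrix m n R) : (Uᵀ * P)ᵀ * (Uᵀ * P) = Pᵀ * P := by
  rw [transpose_mul, transpose_transpose, Matrix.mul_assoc, ← Matrix.mul_assoc U, hU,
    Matrix.one_mul]

theorem transpose_submatrix_id_mul_mul_submatrix_id [Semiring R] (U : Matrix m n R)
    (X : Matrix m m' R) (V : Matrix m' n' R) (e : k → n) (f : k' → n') :
    (U.submatrix id e)ᵀ * X * V.submatrix id f = (Uᵀ * X * V).submatrix e f :=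
  rfl

theorem transpose_mul_self_submatrix_id [Semiring R] [DecidableEq n] [DecidableEq k]
    {U : Matrix m n R} (hU : Uᵀ * U = 1) {e : k → n} (he : Function.Injective e) :
    (U.submatrix id e)ᵀ * U.submatrix id e = 1 := by
  change (Uᵀ * U).submatrix e e = 1
  rw [hU, submatrix_one _ he]

end Submatrix

/-- for H ∈ ℝ^{N×M} with SVD H = U Σ Vᵀ (singular values σ₀ ≥ σ₁ ≥ ...)
and K ≤ min(N,M), the maximum of tr(PᵀHQ) over PᵀP + QᵀQ = I_K is half the sum of
the K largest singular values of H, attained at P = (√2/2)U₁, Q = (√2/2)V₁, where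
U₁, V₁ are the leading K left and right singular vectors. -/
theorem max_trace_joint_orthogonal
    (N M K : ℕ) (hKN : K ≤ N) (hKM : K ≤ M)
    (H : Matrix (Fin N) (Fin M) ℝ)
    (U : Matrix (Fin N) (Fin N) ℝ) (hU : Uᵀ * U = 1) (hU' : U * Uᵀ = 1)
    (V : Matrix (Fin M) (Fin M) ℝ) (hV : Vᵀ * V = 1) (hV' : V * Vᵀ = 1)
    (σ : ℕ → ℝ) (hσ : ∀ i, 0 ≤ σ i) (hσmono : ∀ i j : ℕ, i ≤ j → σ j ≤ σ i)
    (hH : H = U * (Matrix.of fun (i : Fin N) (j : Fin M) =>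
      if (i : ℕ) = (j : ℕ) then σ (i : ℕ) else 0) * Vᵀ) :
    let U₁ : Matrix (Fin N) (Fin K) ℝ := U.submatrix id (Fin.castLE hKN)
    let V₁ : Matrix (Fin M) (Fin K) ℝ := V.submatrix id (Fin.castLE hKM)
    IsGreatest {t : ℝ | ∃ (P : Matrix (Fin N) (Fin K) ℝ) (Q : Matrix (Fin M) (Fin K) ℝ),
        Pᵀ * P + Qᵀ * Q = 1 ∧ t = (Pᵀ * H * Q).trace}
      ((∑ k : Fin K, σ (k : ℕ)) / 2) ∧
    -- the maximum is attained at P = (√2/2)U₁, Q = (√2/2)V₁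
    ((Real.sqrt 2 / 2) • U₁)ᵀ * ((Real.sqrt 2 / 2) • U₁) +
        ((Real.sqrt 2 / 2) • V₁)ᵀ * ((Real.sqrt 2 / 2) • V₁) = 1 ∧
    ((((Real.sqrt 2 / 2) • U₁)ᵀ * H * ((Real.sqrt 2 / 2) • V₁)).trace =
      (∑ k : Fin K, σ (k : ℕ)) / 2) := by
  intro U₁ V₁
  change H = U * rectDiagonal N M σ * Vᵀ at hH
  have hdiag : Uᵀ * H * V = rectDiagonal N M σ := by
    rw [hH, ← Matrix.mul_assoc, ← Matrix.mul_assoc, hU, Matrix.one_mul, Matrix.mul_assoc, hV,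
      Matrix.mul_one]
  have hhalf : √2 / 2 * (√2 / 2) = (1 / 2 : ℝ) := by
    rw [div_mul_div_comm, Real.mul_self_sqrt zero_le_two]; norm_num
  have hU₁ : U₁ᵀ * U₁ = 1 := transpose_mul_self_submatrix_id hU (Fin.castLE_injective hKN)
  have hV₁ : V₁ᵀ * V₁ = 1 := transpose_mul_self_submatrix_id hV (Fin.castLE_injective hKM)
  have horth : ((√2 / 2) • U₁)ᵀ * ((√2 / 2) • U₁) + ((√2 / 2) • V₁)ᵀ * ((√2 / 2) • V₁) = 1 := by
    simp only [transpose_smul, Matrix.smul_mul, Matrix.mul_smul, smul_smul, hhalf, hU₁, hV₁,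
      ← add_smul]
    norm_num
  have hvalue : (((√2 / 2) • U₁)ᵀ * H * ((√2 / 2) • V₁)).trace = (∑ k : Fin K, σ k) / 2 := by
    rw [transpose_smul, Matrix.smul_mul, Matrix.smul_mul, Matrix.mul_smul, smul_smul, hhalf,
      trace_smul, transpose_submatrix_id_mul_mul_submatrix_id, hdiag]
    simp [trace, rectDiagonal, div_eq_inv_mul]
  refine ⟨⟨⟨_, _, horth, hvalue.symm⟩, ?_⟩, horth, hvalue⟩
  rintro t ⟨P, Q, hPQ, rfl⟩
  have hrotate : Pᵀ * H * Q = (Uᵀ * P)ᵀ * rectDiagonal N M σ * (Vᵀ * Q) := by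
    simp only [hH, transpose_mul, transpose_transpose, Matrix.mul_assoc]
  rw [hrotate]
  refine (trace_transpose_mul_rectDiagonal_mul_le ?_ hσ hσmono).trans_eq ?_
  · rw [transpose_mul_transpose_mul_self hU', transpose_mul_transpose_mul_self hV', hPQ]
  · rw [Fintype.card_fin, Fin.sum_univ_eq_sum_range]
end

section
/- Ky Fan's theorem: for a real symmetric N×N matrix L with eigenvalues λ₁ ≤ λ₂ ≤ ... ≤ λ_N, the minimum of tr(FᵀLF) over all F ∈ ℝ^{N×K} with FᵀF = I_K equals λ₁ + λ₂ + ... + λ_K. -/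
/-!
Write `L = U diag(λ) Uᵀ` and `G = Uᵀ F`. Then `G` again has orthonormal columns and
`tr(Fᵀ L F) = ∑ᵢ λᵢ sᵢ` with `sᵢ = ∑ₖ Gᵢₖ²`. These weights satisfy `0 ≤ sᵢ ≤ 1` (as `sᵢ` is a
diagonal entry of the orthogonal projection `G Gᵀ`) and `∑ᵢ sᵢ = K`, and for nondecreasing `λ` a
weighted sum under these constraints is smallest when the whole mass sits on the first `K`
indices. The first `K` columns of `U` attain the bound.
-/

open Matrix Finset

namespace Matrix

variable {m n R : Type*} [Fintype m] [Fintype n]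

section CommSemiring

variable [CommSemiring R]

theorem trace_transpose_mul_diagonal_mul [DecidableEq m] (G : Matrix m n R) (d : m → R) :
    (Gᵀ * diagonal d * G).trace = ∑ i, d i * ∑ k, G i k ^ 2 := by
  simp only [trace, diag_apply, mul_apply, transpose_apply, diagonal_apply, mul_ite, mul_zero,
    sum_ite_eq', mem_univ, if_true, mul_sum]
  rw [sum_comm]
  exact sum_congr rfl fun i _ => sum_congr rfl fun k _ => by ring

theorem sum_sum_sq_of_transpose_mul_self_eq_one [DecidableEq n] {G : Matrix m n R}
    (hG : Gᵀ * G = 1) : ∑ i, ∑ k, G i k ^ 2 = Fintype.card n := by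
  classical
  simpa [hG] using (trace_transpose_mul_diagonal_mul G (fun _ => (1 : R))).symm

variable {l : Type*} [DecidableEq l] [DecidableEq m] {U : Matrix m m R} {e : l → m}

theorem transpose_mul_self_submatrix_eq_one (hU : Uᵀ * U = 1) (he : Function.Injective e) :
    (U.submatrix id e)ᵀ * U.submatrix id e = 1 := by
  rw [transpose_submatrix, ← submatrix_mul _ _ _ _ _ Function.bijective_id, hU,
    submatrix_one _ he]

theorem trace_submatrix_conj_diagonal [Fintype l] (hU : Uᵀ * U = 1) (he : Function.Injective e)
    (d : m → R) :
    ((U.submatrix id e)ᵀ * (U * diagonal d * Uᵀ) * U.submatrix id e).trace = ∑ k, d (e k) := by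
  have hdiag : Uᵀ * (U * diagonal d * Uᵀ) * U = diagonal d := by
    rw [← Matrix.mul_assoc, ← Matrix.mul_assoc, hU, Matrix.one_mul, Matrix.mul_assoc, hU,
      Matrix.mul_one]
  rw [transpose_submatrix, ← submatrix_id_id (U * diagonal d * Uᵀ),
    ← submatrix_mul _ _ _ _ _ Function.bijective_id,
    ← submatrix_mul _ _ _ _ _ Function.bijective_id, hdiag, submatrix_diagonal _ _ he,
    trace_diagonal]
  rfl

end CommSemiring

variable [CommRing R] [LinearOrder R] [IsStrictOrderedRing R]

/-- The diagonal entry `p = (G * Gᵀ) i i` of the idempotent symmetric matrix `G * Gᵀ` equals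
`∑ j, (G * Gᵀ) i j ^ 2 ≥ p ^ 2`. -/
theorem sum_sq_row_le_one_of_transpose_mul_self_eq_one [DecidableEq n] {G : Matrix m n R}
    (hG : Gᵀ * G = 1) (i : m) : ∑ k, G i k ^ 2 ≤ 1 := by
  set P := G * Gᵀ
  have hPP : P * P = P := by
    rw [Matrix.mul_assoc, ← Matrix.mul_assoc Gᵀ, hG, Matrix.one_mul]
  have hPii : P i i = ∑ k, G i k ^ 2 := by simp [P, mul_apply, sq]
  have hP_sq : P i i = ∑ j, P i j ^ 2 := by
    conv_lhs => rw [← hPP]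
    simp only [mul_apply (M := P), sq]
    exact sum_congr rfl fun j _ => by simp [P, mul_apply, mul_comm]
  have : P i i ^ 2 ≤ P i i := hP_sq ▸ single_le_sum (fun j _ => sq_nonneg (P i j)) (mem_univ i)
  nlinarith

end Matrix

variable {R : Type*} [CommRing R] [LinearOrder R] [IsStrictOrderedRing R]

/-- Summing `c * (s i - [i ∈ T]) ≤ lam i * s i - [i ∈ T] * lam i`, which holds termwise because
both `lam i - c` and `s i - [i ∈ T]` change sign exactly when leaving `T`. -/
theorem Finset.sum_le_sum_mul_of_threshold {ι : Type*} [Fintype ι] [DecidableEq ι]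
    (T : Finset ι) (lam s : ι → R) (c : R) (hs0 : ∀ i, 0 ≤ s i) (hs1 : ∀ i, s i ≤ 1)
    (hs : ∑ i, s i = #T) (hT : ∀ i ∈ T, lam i ≤ c) (hTc : ∀ i ∉ T, c ≤ lam i) :
    ∑ i ∈ T, lam i ≤ ∑ i, lam i * s i := by
  have hpt : ∀ i, c * (s i - if i ∈ T then 1 else 0) ≤
      lam i * s i - if i ∈ T then lam i else 0 := by
    intro i
    split_ifs with hi
    · nlinarith [hT i hi, hs1 i]
    · nlinarith [hTc i hi, hs0 i]
  have hc : ∑ i, c * (s i - if i ∈ T then 1 else 0) = 0 := by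
    rw [← mul_sum, sum_sub_distrib, hs, sum_boole]
    simp
  have := sum_le_sum fun i (_ : i ∈ univ) => hpt i
  rw [hc, sum_sub_distrib, sum_ite_mem, univ_inter] at this
  linarith

theorem Monotone.exists_threshold_fin {N : ℕ} {α : Type*} [LinearOrder α] [Nonempty α]
    {lam : Fin N → α} (hmono : Monotone lam) (K : ℕ) :
    ∃ c, (∀ i : Fin N, (i : ℕ) < K → lam i ≤ c) ∧ ∀ i : Fin N, K ≤ (i : ℕ) → c ≤ lam i := by
  by_cases hK : K < N
  · exact ⟨lam ⟨K, hK⟩, fun i hi => hmono (Fin.le_def.2 hi.le),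
      fun i hi => hmono (Fin.le_def.2 hi)⟩
  · obtain ⟨c, hc⟩ := (Set.finite_range lam).bddAbove
    exact ⟨c, fun i _ => hc ⟨i, rfl⟩, fun i hi => absurd i.2 (by omega)⟩

theorem Monotone.sum_castLE_le_trace_transpose_mul_diagonal_mul {N K : ℕ} (hK : K ≤ N)
    {lam : Fin N → R} (hmono : Monotone lam) {G : Matrix (Fin N) (Fin K) R}
    (hG : Gᵀ * G = 1) :
    ∑ k : Fin K, lam (Fin.castLE hK k) ≤ (Gᵀ * diagonal lam * G).trace := by
  obtain ⟨c, hc_lt, hc_ge⟩ := hmono.exists_threshold_fin K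
  have hmem : ∀ i, i ∈ univ.map (Fin.castLEEmb hK) ↔ (i : ℕ) < K := fun i => by
    simp [← Set.mem_range, Fin.range_castLE]
  rw [trace_transpose_mul_diagonal_mul]
  refine (sum_map univ (Fin.castLEEmb hK) lam).symm.trans_le <|
    sum_le_sum_mul_of_threshold _ _ _ c (fun i => sum_nonneg fun k _ => sq_nonneg _)
    (sum_sq_row_le_one_of_transpose_mul_self_eq_one hG)
    (by simp [sum_sum_sq_of_transpose_mul_self_eq_one hG])
    (fun i hi => hc_lt i ((hmem i).1 hi)) (fun i hi => hc_ge i (not_lt.1 (mt (hmem i).2 hi)))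

theorem ky_fan_min_trace_general
    (N K : ℕ) (hK : K ≤ N) (L : Matrix (Fin N) (Fin N) ℝ)
    (lam : Fin N → ℝ) (hmono : Monotone lam)
    (U : Matrix (Fin N) (Fin N) ℝ) (hU : Uᵀ * U = 1) (hU' : U * Uᵀ = 1)
    (hdecomp : L = U * Matrix.diagonal lam * Uᵀ) :
    IsLeast {t : ℝ | ∃ F : Matrix (Fin N) (Fin K) ℝ,
        Fᵀ * F = 1 ∧ t = (Fᵀ * L * F).trace}
      (∑ k : Fin K, lam (Fin.castLE hK k)) := by
  subst hdecomp
  have he : Function.Injective (Fin.castLE hK) := Fin.castLE_injective hK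
  refine ⟨⟨U.submatrix id (Fin.castLE hK), transpose_mul_self_submatrix_eq_one hU he,
    (trace_submatrix_conj_diagonal hU he lam).symm⟩, ?_⟩
  rintro t ⟨F, hF, rfl⟩
  have hG : (Uᵀ * F)ᵀ * (Uᵀ * F) = 1 := by
    rw [transpose_mul, transpose_transpose, Matrix.mul_assoc, ← Matrix.mul_assoc U, hU',
      Matrix.one_mul, hF]
  have hconj : Fᵀ * (U * diagonal lam * Uᵀ) * F = (Uᵀ * F)ᵀ * diagonal lam * (Uᵀ * F) := by
    simp only [transpose_mul, transpose_transpose, Matrix.mul_assoc]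
  rw [hconj]
  exact hmono.sum_castLE_le_trace_transpose_mul_diagonal_mul hK hG

/-- Ky Fan: for a real symmetric N×N matrix L with eigenvalues
λ₁ ≤ ... ≤ λ_N (given via an orthogonal eigendecomposition L = U diag(λ) Uᵀ
with λ nondecreasing), the minimum of tr(FᵀLF) over F with FᵀF = I_K equals
λ₁ + ... + λ_K. -/
theorem ky_fan_min_trace
    (N K : ℕ) (hK : K ≤ N) (L : Matrix (Fin N) (Fin N) ℝ) (hL : L.IsSymm)
    (lam : Fin N → ℝ) (hmono : Monotone lam)
    (U : Matrix (Fin N) (Fin N) ℝ) (hU : Uᵀ * U = 1) (hU' : U * Uᵀ = 1)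
    (hdecomp : L = U * Matrix.diagonal lam * Uᵀ) :
    IsLeast {t : ℝ | ∃ F : Matrix (Fin N) (Fin K) ℝ,
        Fᵀ * F = 1 ∧ t = (Fᵀ * L * F).trace}
      (∑ k : Fin K, lam (Fin.castLE hK k)) :=
  ky_fan_min_trace_general N K hK L lam hmono U hU hU' hdecomp
end

section
/- For 0 < p ≤ 1, a scalar x ≥ 0, and τ > 0, the minimizer over σ ≥ 0 of the scalar function f(σ) = (1/2)(σ − x)² + τσ^p is: σ* = 0 if x ≤ ν, and σ* is the larger root of σ + τpσ^{p−1} = x if x > ν, where ν = (2τ(1−p))^{1/(2−p)} + τp(2τ(1−p))^{(p−1)/(2−p)} is the thresholding value. In particular, for p = 1 this reduces to σ* = max(x − τ, 0). -/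
/-!
For `p ≤ 1` and `s > 0`, multiplying the tangent-line inequality of the convex function
`σ ↦ σ ^ (p - 1)` at `s` by `σ` shows that `σ ^ p` lies above the quadratic
`s ^ p + p s ^ (p - 1) (σ - s) - (1 - p) s ^ (p - 2) (σ - s) ^ 2` on `σ ≥ 0`.
Hence at a root `s` of `σ + τ p σ ^ (p - 1) = x` with `2 τ (1 - p) ≤ s ^ (2 - p)`,
`f σ - f s ≥ (1 / 2 - τ (1 - p) s ^ (p - 2)) (σ - s) ^ 2 ≥ 0`, and the same tangent line shows that
`σ + τ p σ ^ (p - 1)` increases strictly past `s`. The curvature bound is tight at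
`s₀ = (2 τ (1 - p)) ^ (1 / (2 - p))`, where `ν = s₀ + τ p s₀ ^ (p - 1)`: there the minorant gives
`f σ - f 0 ≥ σ (ν - x)`, and for `x > ν` the intermediate value theorem produces a root beyond `s₀`.
-/

open Real

theorem one_add_mul_sub_one_le_rpow_of_nonpos {q u : ℝ} (hq : q ≤ 0) (hu : 0 < u) :
    1 + q * (u - 1) ≤ u ^ q := by
  -- Bernoulli for the exponent `1 - q ≥ 1` at `u⁻¹`, multiplied by `u`.
  have hB := one_add_mul_self_le_rpow_one_add (s := u⁻¹ - 1) (by linarith [inv_pos.2 hu])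
    (p := 1 - q) (by linarith)
  calc 1 + q * (u - 1) = u * (1 + (1 - q) * (u⁻¹ - 1)) := by field_simp; ring
    _ ≤ u ^ (1 : ℝ) * (1 + (u⁻¹ - 1)) ^ (1 - q) := by rw [rpow_one]; gcongr
    _ = u ^ q := by
      rw [add_sub_cancel, inv_rpow hu.le, ← rpow_neg hu.le, ← rpow_add hu]
      ring_nf

theorem rpow_add_mul_rpow_sub_one_mul_sub_le_of_nonpos {q s t : ℝ} (hq : q ≤ 0) (hs : 0 < s)
    (ht : 0 < t) : s ^ q + q * s ^ (q - 1) * (t - s) ≤ t ^ q := by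
  have h := mul_le_mul_of_nonneg_left (one_add_mul_sub_one_le_rpow_of_nonpos hq (div_pos ht hs))
    (rpow_nonneg hs.le q)
  rw [div_rpow ht.le hs.le, mul_div_cancel₀ _ (rpow_pos_of_pos hs q).ne'] at h
  rw [rpow_sub_one hs.ne']
  calc s ^ q + q * (s ^ q / s) * (t - s) = s ^ q * (1 + q * (t / s - 1)) := by field_simp
    _ ≤ t ^ q := h

theorem rpow_quadratic_minorant {p s σ : ℝ} (hp1 : p ≤ 1) (hs : 0 < s) (hσ : 0 ≤ σ) :
    s ^ p + p * s ^ (p - 1) * (σ - s) - (1 - p) * s ^ (p - 2) * (σ - s) ^ 2 ≤ σ ^ p := by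
  have h1 : s ^ (p - 1) = s ^ (p - 2) * s := by rw [← rpow_add_one hs.ne']; ring_nf
  have h2 : s ^ p = s ^ (p - 2) * s ^ 2 := by rw [← rpow_add_natCast hs.ne']; ring_nf
  rcases hσ.eq_or_lt with rfl | hσ
  · rw [h1, h2]
    nlinarith [rpow_nonneg hσ p]
  have htangent := rpow_add_mul_rpow_sub_one_mul_sub_le_of_nonpos (by linarith : p - 1 ≤ 0) hs hσ
  rw [show p - 1 - 1 = p - 2 by ring, h1] at htangent
  have h3 : σ ^ p = σ * σ ^ (p - 1) := by
    conv_lhs => rw [show p = 1 + (p - 1) by ring, rpow_add hσ, rpow_one]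
  rw [h3, h1, h2]
  nlinarith [mul_le_mul_of_nonneg_left htangent hσ.le]

theorem mul_rpow_sub_two_le_one {p c s : ℝ} (hs : 0 < s) (h : c ≤ s ^ (2 - p)) :
    c * s ^ (p - 2) ≤ 1 := by
  calc c * s ^ (p - 2) ≤ s ^ (2 - p) * s ^ (p - 2) := by gcongr
    _ = 1 := by rw [← rpow_add hs]; norm_num

namespace ScalarProx

noncomputable def objective (p τ x σ : ℝ) : ℝ := 1 / 2 * (σ - x) ^ 2 + τ * σ ^ p

theorem objective_le_of_root {p τ x s σ : ℝ} (hp1 : p ≤ 1) (hτ : 0 ≤ τ) (hs : 0 < s)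
    (hcurv : 2 * τ * (1 - p) ≤ s ^ (2 - p)) (hroot : s + τ * p * s ^ (p - 1) = x)
    (hσ : 0 ≤ σ) : objective p τ x s ≤ objective p τ x σ := by
  have hκ := mul_rpow_sub_two_le_one hs hcurv
  have hmin := mul_le_mul_of_nonneg_left (rpow_quadratic_minorant hp1 hs hσ) hτ
  unfold objective
  nlinarith [mul_le_mul_of_nonneg_right hκ (sq_nonneg (σ - s))]

theorem objective_zero_le {p τ x s σ : ℝ} (hp : 0 < p) (hp1 : p ≤ 1) (hτ : 0 ≤ τ) (hs : 0 < s)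
    (hcrit : s ^ (2 - p) = 2 * τ * (1 - p)) (hx : x ≤ s + τ * p * s ^ (p - 1)) (hσ : 0 ≤ σ) :
    objective p τ x 0 ≤ objective p τ x σ := by
  have hκ : 2 * τ * (1 - p) * s ^ (p - 2) = 1 := by rw [← hcrit, ← rpow_add hs]; norm_num
  have h1 : s ^ (p - 1) = s ^ (p - 2) * s := by rw [← rpow_add_one hs.ne']; ring_nf
  have h2 : s ^ p = s ^ (p - 2) * s ^ 2 := by rw [← rpow_add_natCast hs.ne']; ring_nf
  have hmin := mul_le_mul_of_nonneg_left (rpow_quadratic_minorant hp1 hs hσ) hτ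
  rw [h1, h2] at hmin
  rw [h1] at hx
  unfold objective
  rw [zero_rpow hp.ne']
  nlinarith [mul_le_mul_of_nonneg_right hx hσ]

theorem le_of_root_eq {p τ s σ : ℝ} (hp : 0 ≤ p) (hp1 : p ≤ 1) (hτ : 0 ≤ τ) (hs : 0 < s)
    (hcurv : 2 * τ * (1 - p) ≤ s ^ (2 - p)) (hσ : 0 < σ)
    (hroot : σ + τ * p * σ ^ (p - 1) = s + τ * p * s ^ (p - 1)) : σ ≤ s := by
  by_contra! hsσ
  have hκ := mul_rpow_sub_two_le_one hs hcurv
  have htangent := rpow_add_mul_rpow_sub_one_mul_sub_le_of_nonpos (by linarith : p - 1 ≤ 0) hs hσ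
  rw [show p - 1 - 1 = p - 2 by ring] at htangent
  nlinarith [mul_le_mul_of_nonneg_left htangent (mul_nonneg hτ hp),
    mul_le_mul_of_nonneg_right hκ (mul_nonneg hp (sub_pos.2 hsσ).le)]

theorem exists_root_gt {p τ x s₀ : ℝ} (hp : 0 ≤ p) (hτ : 0 ≤ τ) (hs₀ : 0 ≤ s₀)
    (hs₀p : 0 < s₀ ∨ p = 1) (hx : s₀ + τ * p * s₀ ^ (p - 1) < x) :
    ∃ s, s₀ < s ∧ s + τ * p * s ^ (p - 1) = x := by
  have hτp : 0 ≤ τ * p := mul_nonneg hτ hp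
  have hs₀x : s₀ ≤ x := by nlinarith [rpow_nonneg hs₀ (p - 1)]
  have hcont : ContinuousOn (fun σ : ℝ => σ + τ * p * σ ^ (p - 1)) (Set.Icc s₀ x) := by
    refine continuousOn_id.add (continuousOn_const.mul fun σ hσ => ?_)
    refine (continuousAt_rpow_const σ (p - 1) ?_).continuousWithinAt
    rcases hs₀p with h | rfl
    · exact Or.inl (h.trans_le hσ.1).ne'
    · exact Or.inr (by norm_num)
  obtain ⟨s, hs, hroot⟩ := intermediate_value_Icc hs₀x hcont
    ⟨hx.le, le_add_of_nonneg_right (mul_nonneg hτp (rpow_nonneg (hs₀.trans hs₀x) _))⟩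
  refine ⟨s, hs.1.lt_of_ne ?_, hroot⟩
  rintro rfl
  exact hx.ne hroot

end ScalarProx

open ScalarProx in
theorem scalar_prox_power_general
    (p τ x : ℝ) (hp : 0 < p) (hp1 : p ≤ 1) (hτ : 0 < τ) :
    let f : ℝ → ℝ := fun σ => (1 / 2) * (σ - x) ^ 2 + τ * σ ^ p
    let ν : ℝ := (2 * τ * (1 - p)) ^ (1 / (2 - p)) +
      τ * p * (2 * τ * (1 - p)) ^ ((p - 1) / (2 - p))
    (x ≤ ν → ∀ σ : ℝ, 0 ≤ σ → f 0 ≤ f σ) ∧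
      (x > ν → ∃ σstar : ℝ, 0 < σstar ∧
        σstar + τ * p * σstar ^ (p - 1) = x ∧
        (∀ σ : ℝ, 0 ≤ σ → f σstar ≤ f σ) ∧
        (∀ σ : ℝ, 0 < σ → σ + τ * p * σ ^ (p - 1) = x → σ ≤ σstar)) ∧
      (p = 1 → ∀ σ : ℝ, 0 ≤ σ → f (max (x - τ) 0) ≤ f σ) := by
  intro f ν
  have hc : 0 ≤ 2 * τ * (1 - p) := by nlinarith
  set s₀ := (2 * τ * (1 - p)) ^ (1 / (2 - p))
  have hs₀ : 0 ≤ s₀ := rpow_nonneg hc _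
  have hs₀p : 0 < s₀ ∨ p = 1 := hp1.lt_or_eq.imp (fun _ => rpow_pos_of_pos (by nlinarith) _) id
  have hcrit : s₀ ^ (2 - p) = 2 * τ * (1 - p) := by
    rw [← rpow_mul hc, one_div_mul_cancel (by linarith), rpow_one]
  have hν : ν = s₀ + τ * p * s₀ ^ (p - 1) := by rw [← rpow_mul hc, one_div_mul_eq_div]
  have below : x ≤ ν → ∀ σ : ℝ, 0 ≤ σ → f 0 ≤ f σ := by
    intro hxν σ hσ
    rcases hs₀p with hs₀pos | rfl
    · exact objective_zero_le hp hp1 hτ.le hs₀pos hcrit (hν ▸ hxν) hσ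
    · norm_num [ν] at hxν
      norm_num [f]
      nlinarith
  have above : x > ν → ∃ σstar : ℝ, 0 < σstar ∧ σstar + τ * p * σstar ^ (p - 1) = x ∧
      (∀ σ : ℝ, 0 ≤ σ → f σstar ≤ f σ) ∧
      (∀ σ : ℝ, 0 < σ → σ + τ * p * σ ^ (p - 1) = x → σ ≤ σstar) := by
    intro hνx
    obtain ⟨s, hs₀s, hroot⟩ := exists_root_gt hp.le hτ.le hs₀ hs₀p (hν ▸ hνx)
    have hs : 0 < s := hs₀.trans_lt hs₀s
    have hcurv : 2 * τ * (1 - p) ≤ s ^ (2 - p) := hcrit ▸ rpow_le_rpow hs₀ hs₀s.le (by linarith)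
    exact ⟨s, hs, hroot, fun σ hσ => objective_le_of_root hp1 hτ.le hs hcurv hroot hσ,
      fun σ hσ hσroot => le_of_root_eq hp.le hp1 hτ.le hs hcurv hσ (hσroot.trans hroot.symm)⟩
  refine ⟨below, above, ?_⟩
  rintro rfl σ hσ
  have hν₁ : ν = τ := by norm_num [ν]
  rcases le_or_gt x τ with hxτ | hτx
  · rw [max_eq_right (by linarith)]
    exact below (hν₁ ▸ hxτ) σ hσ
  · obtain ⟨s, -, hroot, hmin, -⟩ := above (hν₁ ▸ hτx)
    norm_num at hroot
    rw [max_eq_left (by linarith), show x - τ = s by linarith]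
    exact hmin σ hσ

/-- scalar proximal operator of σ ↦ τσ^p (0 < p ≤ 1).
For f(σ) = (1/2)(σ − x)² + τσ^p on σ ≥ 0 and threshold
ν = (2τ(1−p))^{1/(2−p)} + τp(2τ(1−p))^{(p−1)/(2−p)}:
if x ≤ ν then 0 is a global minimizer; if x > ν then the minimizer is the
larger root of σ + τpσ^{p−1} = x. For p = 1 the minimizer is max(x − τ, 0). -/
theorem scalar_prox_power
    (p τ x : ℝ) (hp : 0 < p) (hp1 : p ≤ 1) (hτ : 0 < τ) (hx : 0 ≤ x) :
    let f : ℝ → ℝ := fun σ => (1 / 2) * (σ - x) ^ 2 + τ * σ ^ p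
    let ν : ℝ := (2 * τ * (1 - p)) ^ (1 / (2 - p)) +
      τ * p * (2 * τ * (1 - p)) ^ ((p - 1) / (2 - p))
    (x ≤ ν → ∀ σ : ℝ, 0 ≤ σ → f 0 ≤ f σ) ∧
      (x > ν → ∃ σstar : ℝ, 0 < σstar ∧
        σstar + τ * p * σstar ^ (p - 1) = x ∧
        (∀ σ : ℝ, 0 ≤ σ → f σstar ≤ f σ) ∧
        (∀ σ : ℝ, 0 < σ → σ + τ * p * σ ^ (p - 1) = x → σ ≤ σstar)) ∧
      (p = 1 → ∀ σ : ℝ, 0 ≤ σ → f (max (x - τ) 0) ≤ f σ) :=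
  scalar_prox_power_general p τ x hp hp1 hτ
end

section
/- For the probability simplex projection, the Lagrange-multiplier equation is solvable: given v ∈ ℝ^M, there exists a unique γ ∈ ℝ such that Σⱼ max(vⱼ + γ, 0) = 1, and the map γ ↦ Σⱼ max(vⱼ + γ, 0) is continuous, nondecreasing, and strictly increasing wherever its value is positive. -/
/-!
The map `γ ↦ ∑ⱼ max (vⱼ + γ) 0` is a finite sum of continuous nondecreasing functions. It vanishes
for `γ ≤ -∑ⱼ |vⱼ|` and exceeds any `c` once a single summand does, so by the intermediate value
theorem it takes every value `c ≥ 0`. Where it is positive some summand `vⱼ + γ` is positive, and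
that summand grows strictly with `γ`; hence the map is injective on its positive values.
-/

open Finset

section SumMaxAdd

variable {ι : Type*} [Fintype ι] (v : ι → ℝ)

theorem continuous_sum_max_add : Continuous (fun γ : ℝ => ∑ j, max (v j + γ) 0) := by
  fun_prop

theorem monotone_sum_max_add : Monotone (fun γ : ℝ => ∑ j, max (v j + γ) 0) :=
  fun _ _ h => sum_le_sum fun _ _ => by gcongr

theorem sum_max_add_lt_of_pos {γ₁ γ₂ : ℝ} (h : γ₁ < γ₂) (hpos : 0 < ∑ j, max (v j + γ₁) 0) :
    ∑ j, max (v j + γ₁) 0 < ∑ j, max (v j + γ₂) 0 := by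
  obtain ⟨j, -, hj⟩ := (sum_pos_iff_of_nonneg fun _ _ => le_max_right _ _).mp hpos
  have hj_pos : 0 < v j + γ₁ := (lt_max_iff.mp hj).resolve_right (lt_irrefl 0)
  refine sum_lt_sum (fun i _ => by gcongr) ⟨j, mem_univ j, ?_⟩
  calc max (v j + γ₁) 0 = v j + γ₁ := max_eq_left hj_pos.le
    _ < v j + γ₂ := by linarith
    _ ≤ max (v j + γ₂) 0 := le_max_left _ _

theorem strictMonoOn_sum_max_add :
    StrictMonoOn (fun γ : ℝ => ∑ j, max (v j + γ) 0) {γ | 0 < ∑ j, max (v j + γ) 0} :=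
  fun _ hγ₁ _ _ h => sum_max_add_lt_of_pos v h hγ₁

theorem sum_max_add_eq_zero_of_le {γ : ℝ} (hγ : γ ≤ -∑ j, |v j|) :
    ∑ j, max (v j + γ) 0 = 0 := by
  refine sum_eq_zero fun j _ => max_eq_right ?_
  have := single_le_sum (f := fun i => |v i|) (fun i _ => abs_nonneg (v i)) (mem_univ j)
  linarith [le_abs_self (v j)]

theorem le_sum_max_add (i : ι) (γ : ℝ) : v i + γ ≤ ∑ j, max (v j + γ) 0 :=
  (le_max_left _ _).trans <|
    single_le_sum (f := fun j => max (v j + γ) 0) (fun _ _ => le_max_right _ _) (mem_univ i)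

theorem exists_sum_max_add_eq [Nonempty ι] {c : ℝ} (hc : 0 ≤ c) :
    ∃ γ, ∑ j, max (v j + γ) 0 = c := by
  obtain ⟨i⟩ := ‹Nonempty ι›
  have hlow := sum_max_add_eq_zero_of_le v le_rfl
  have hhigh := le_sum_max_add v i (c - v i)
  refine intermediate_value_univ (-∑ j, |v j|) (c - v i) (continuous_sum_max_add v) ⟨?_, ?_⟩
  · simpa only [hlow] using hc
  · simpa using hhigh

end SumMaxAdd

/-- solvability of the simplex-projection Lagrange multiplier
equation: there is a unique γ with Σⱼ max(vⱼ + γ, 0) = 1, and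
γ ↦ Σⱼ max(vⱼ + γ, 0) is continuous, nondecreasing, and strictly increasing
wherever its value is positive. -/
theorem simplex_lagrange_multiplier
    (M : ℕ) (hM : 0 < M) (v : Fin M → ℝ) :
    (∃! γ : ℝ, ∑ j, max (v j + γ) 0 = 1) ∧
      Continuous (fun γ : ℝ => ∑ j, max (v j + γ) 0) ∧
      Monotone (fun γ : ℝ => ∑ j, max (v j + γ) 0) ∧
      ∀ γ₁ γ₂ : ℝ, γ₁ < γ₂ → 0 < ∑ j, max (v j + γ₁) 0 →
        (∑ j, max (v j + γ₁) 0) < ∑ j, max (v j + γ₂) 0 := by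
  have : Nonempty (Fin M) := ⟨⟨0, hM⟩⟩
  obtain ⟨γ, hγ⟩ := exists_sum_max_add_eq v zero_le_one
  refine ⟨⟨γ, hγ, fun γ' hγ' => ?_⟩, continuous_sum_max_add v, monotone_sum_max_add v,
    fun _ _ => sum_max_add_lt_of_pos v⟩
  exact (strictMonoOn_sum_max_add v).injOn (by simp [hγ']) (by simp [hγ]) (hγ'.trans hγ.symm)
end
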